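/- arXiv:2112.07154 — 3 statements merged into one kernel-verified Lean document; each statement's English description precedes it below -/
import Mathlib

section
/- Let κ ∈ ℝ, M ∈ ℕ, let Ω ⊆ ℝ² be open, (x*,y*) ∈ Ω, and let u : ℝ² → ℂ be (M+1)-times continuously differentiable on Ω. Set f := Δu + κ²u on Ω (where Δ = ∂²/∂x² + ∂²/∂y²). Then for every (m,n) ∈ Λ_{M+1}^2 (i.e. m ≥ 2 and m+n ≤ M+1): u^{(m,n)} = (−1)^{⌊m/2⌋} Σ_{q=0}^{⌊m/2⌋} C(⌊m/2⌋,q) κ^{2q} u^{(odd(m), 2⌊m/2⌋+n−2q)} + Σ_{q=1}^{⌊m/2⌋} Σ_{j=0}^{q−1} (−1)^{q−1} C(q−1,j) κ^{2(q−j−1)} f^{(m−2q, n+2j)}, where all derivatives are evaluated at (x*,y*) and C(a,b) is the binomial coefficient. -/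
/-!
Write `∂ₓ, ∂ᵧ` as directional derivatives along `(1,0)` and `(0,1)`. On an open set they are
additive on `C¹` functions and commute on `C²` functions (symmetry of the second derivative), so
applying `∂ₓᵃ ∂ᵧⁿ` to `f = ∂ₓ²u + ∂ᵧ²u + κ²u` gives, for `a + n + 2 ≤ M + 1`, the recurrence
`u^(a+2,n) = f^(a,n) - u^(a,n+2) - κ² u^(a,n)`. Applying it `⌊m/2⌋` times lowers the `x`-order
to `odd(m)`; the `u`-terms pile up as the binomial expansion of `(-(∂ᵧ² + κ²))^⌊m/2⌋` (Pascal's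
rule), the `f`-terms as the partial expansions of the same power.
-/

open scoped BigOperators
open Complex

/-- The index set `Λ_N = {(m,n) ∈ ℕ×ℕ : m+n ≤ N}`. -/
def Lam (N : ℕ) : Finset (ℕ × ℕ) :=
  (Finset.range (N + 1) ×ˢ Finset.range (N + 1)).filter (fun p => p.1 + p.2 ≤ N)

/-- `Λ_N^1 = {(m,n) ∈ Λ_N : m ≤ 1}`. -/
def Lam1 (N : ℕ) : Finset (ℕ × ℕ) := (Lam N).filter (fun p => p.1 ≤ 1)

/-- `Λ_N^2 = Λ_N \ Λ_N^1 = {(m,n) ∈ Λ_N : m ≥ 2}`. -/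
def Lam2 (N : ℕ) : Finset (ℕ × ℕ) := (Lam N).filter (fun p => 2 ≤ p.1)

/-- Mixed partial derivative `u^{(m,n)} = ∂^{m+n} u / ∂x^m ∂y^n` at `(x,y)`. -/
noncomputable def pd (u : ℝ × ℝ → ℂ) (m n : ℕ) (x y : ℝ) : ℂ :=
  iteratedDeriv m (fun s => iteratedDeriv n (fun t => u (s, t)) y) x

/-- `f = Δu + κ² u`. -/
noncomputable def helm (κ : ℝ) (u : ℝ × ℝ → ℂ) : ℝ × ℝ → ℂ :=
  fun p => pd u 2 0 p.1 p.2 + pd u 0 2 p.1 p.2 + (κ : ℂ) ^ 2 * u p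

/-- The polynomial `G_{N,m,n}(x,y)`; the sum is empty (0) when `m+n > N`. -/
noncomputable def Gpoly (κ : ℝ) (N m n : ℕ) (x y : ℂ) : ℂ :=
  if m + n ≤ N then
    ∑ p ∈ Finset.range ((N - m - n) / 2 + 1),
      ∑ ℓ ∈ Finset.Icc p (p + n / 2),
        (-1 : ℂ) ^ ℓ * (Nat.choose ℓ p : ℂ) * (κ : ℂ) ^ (2 * p) *
          x ^ (m + 2 * ℓ) * y ^ (n + 2 * p - 2 * ℓ) /
          ((Nat.factorial (m + 2 * ℓ) : ℂ) * (Nat.factorial (n + 2 * p - 2 * ℓ) : ℂ))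
  else 0

/-- The polynomial `H_{N,m,n}(x,y)`; the sum is empty (0) when `m+n+2 > N`. -/
noncomputable def Hpoly (κ : ℝ) (N m n : ℕ) (x y : ℂ) : ℂ :=
  if m + n + 2 ≤ N then
    ∑ p ∈ Finset.range ((N - 2 - m - n) / 2 + 1),
      ∑ ℓ ∈ Finset.Icc (p + 1) (p + n / 2 + 1),
        (-1 : ℂ) ^ (ℓ - 1) * (Nat.choose (ℓ - 1) p : ℂ) * (κ : ℂ) ^ (2 * p) *
          x ^ (m + 2 * ℓ) * y ^ (2 * p + n + 2 - 2 * ℓ) /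
          ((Nat.factorial (m + 2 * ℓ) : ℂ) * (Nat.factorial (2 * p + n + 2 - 2 * ℓ) : ℂ))
  else 0

section DirectionalDerivative

open Set

variable {E F : Type*} [NormedAddCommGroup E] [NormedSpace ℝ E]
  [NormedAddCommGroup F] [NormedSpace ℝ F]

noncomputable def dirDeriv (v : E) (f : E → F) : E → F := fun x => lineDeriv ℝ f x v

variable {v w : E} {f g : E → F} {s : Set E} {x : E}

theorem DifferentiableAt.dirDeriv_eq_fderiv (hf : DifferentiableAt ℝ f x) :
    dirDeriv v f x = fderiv ℝ f x v :=
  hf.lineDeriv_eq_fderiv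

theorem eqOn_dirDeriv_of_eqOn (hs : IsOpen s) (h : EqOn f g s) :
    EqOn (dirDeriv v f) (dirDeriv v g) s := fun _ hx =>
  (h.eventuallyEq_of_mem (hs.mem_nhds hx)).lineDeriv_eq

theorem eqOn_iterate_dirDeriv_of_eqOn (hs : IsOpen s) (h : EqOn f g s) (n : ℕ) :
    EqOn ((dirDeriv v)^[n] f) ((dirDeriv v)^[n] g) s := by
  induction n generalizing f g with
  | zero => exact h
  | succ n ih => exact ih (eqOn_dirDeriv_of_eqOn hs h)

theorem contDiffOn_dirDeriv {k : ℕ} (hs : IsOpen s) (hf : ContDiffOn ℝ (k + 1) f s) :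
    ContDiffOn ℝ k (dirDeriv v f) s := by
  refine ((hf.fderiv_of_isOpen hs le_rfl).clm_apply (contDiffOn_const (c := v))).congr
    fun x hx => ?_
  exact ((hf.differentiableOn (by simp)).differentiableAt (hs.mem_nhds hx)).dirDeriv_eq_fderiv

theorem contDiffOn_iterate_dirDeriv {k n : ℕ} (hs : IsOpen s) (hf : ContDiffOn ℝ (k + n) f s) :
    ContDiffOn ℝ k ((dirDeriv v)^[n] f) s := by
  induction n generalizing f with
  | zero => simpa using hf
  | succ n ih =>
    refine ih (contDiffOn_dirDeriv hs ?_)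
    simpa [add_assoc] using hf

theorem dirDeriv_add (hf : DifferentiableAt ℝ f x) (hg : DifferentiableAt ℝ g x) :
    dirDeriv v (f + g) x = dirDeriv v f x + dirDeriv v g x := by
  rw [(hf.add hg).dirDeriv_eq_fderiv, hf.dirDeriv_eq_fderiv, hg.dirDeriv_eq_fderiv,
    fderiv_add hf hg]
  rfl

theorem dirDeriv_const_smul {R : Type*} [Semiring R] [Module R F] [SMulCommClass ℝ R F]
    [ContinuousConstSMul R F] (c : R) (hf : DifferentiableAt ℝ f x) :
    dirDeriv v (c • f) x = c • dirDeriv v f x := by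
  rw [(hf.const_smul c).dirDeriv_eq_fderiv, hf.dirDeriv_eq_fderiv, fderiv_const_smul hf]
  rfl

theorem dirDeriv_dirDeriv_comm (hs : IsOpen s) (hf : ContDiffOn ℝ 2 f s) (hx : x ∈ s) :
    dirDeriv v (dirDeriv w f) x = dirDeriv w (dirDeriv v f) x := by
  have hfx : ContDiffAt ℝ 2 f x := hf.contDiffAt (hs.mem_nhds hx)
  have hDf : DifferentiableAt ℝ (fderiv ℝ f) x :=
    (hfx.fderiv_right (m := 1) le_rfl).differentiableAt one_ne_zero
  have key : ∀ a b : E, dirDeriv a (dirDeriv b f) x = fderiv ℝ (fderiv ℝ f) x a b := by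
    intro a b
    have hfd : dirDeriv b f =ᶠ[nhds x] fun y => fderiv ℝ f y b := by
      filter_upwards [hs.mem_nhds hx] with y hy
      exact ((hf.differentiableOn (by simp)).differentiableAt (hs.mem_nhds hy)).dirDeriv_eq_fderiv
    rw [dirDeriv, hfd.lineDeriv_eq]
    simpa using ((hDf.hasFDerivAt.clm_apply (hasFDerivAt_const b x)).hasLineDerivAt a).lineDeriv
  rw [key, key, (hfx.isSymmSndFDerivAt (by simp)).eq]

theorem eqOn_iterate_dirDeriv_add (hs : IsOpen s) {n : ℕ} (hf : ContDiffOn ℝ n f s)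
    (hg : ContDiffOn ℝ n g s) :
    EqOn ((dirDeriv v)^[n] (f + g)) ((dirDeriv v)^[n] f + (dirDeriv v)^[n] g) s := by
  induction n generalizing f g with
  | zero => exact fun _ _ => rfl
  | succ n ih =>
    have hD : EqOn (dirDeriv v (f + g)) (dirDeriv v f + dirDeriv v g) s := fun y hy =>
      dirDeriv_add ((hf.differentiableOn (by simp)).differentiableAt (hs.mem_nhds hy))
        ((hg.differentiableOn (by simp)).differentiableAt (hs.mem_nhds hy))
    intro y hy
    rw [Function.iterate_succ_apply, eqOn_iterate_dirDeriv_of_eqOn hs hD n hy]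
    exact ih (contDiffOn_dirDeriv hs hf) (contDiffOn_dirDeriv hs hg) hy

theorem eqOn_iterate_dirDeriv_const_smul {R : Type*} [Semiring R] [Module R F]
    [SMulCommClass ℝ R F] [ContinuousConstSMul R F] (c : R) (hs : IsOpen s) {n : ℕ}
    (hf : ContDiffOn ℝ n f s) :
    EqOn ((dirDeriv v)^[n] (c • f)) (c • (dirDeriv v)^[n] f) s := by
  induction n generalizing f with
  | zero => exact fun _ _ => rfl
  | succ n ih =>
    have hD : EqOn (dirDeriv v (c • f)) (c • dirDeriv v f) s := fun y hy =>
      dirDeriv_const_smul c ((hf.differentiableOn (by simp)).differentiableAt (hs.mem_nhds hy))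
    intro y hy
    rw [Function.iterate_succ_apply, eqOn_iterate_dirDeriv_of_eqOn hs hD n hy]
    exact ih (contDiffOn_dirDeriv hs hf) hy

theorem eqOn_dirDeriv_iterate_dirDeriv_comm (hs : IsOpen s) {n : ℕ}
    (hf : ContDiffOn ℝ (n + 1) f s) :
    EqOn (dirDeriv v ((dirDeriv w)^[n] f)) ((dirDeriv w)^[n] (dirDeriv v f)) s := by
  induction n generalizing f with
  | zero => exact fun _ _ => rfl
  | succ n ih =>
    have hcomm : EqOn (dirDeriv v (dirDeriv w f)) (dirDeriv w (dirDeriv v f)) s := fun y hy =>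
      dirDeriv_dirDeriv_comm hs (hf.of_le (by norm_cast; omega)) hy
    intro y hy
    rw [Function.iterate_succ_apply, Function.iterate_succ_apply,
      ih (contDiffOn_dirDeriv hs hf) hy]
    exact eqOn_iterate_dirDeriv_of_eqOn hs hcomm n hy

theorem eqOn_iterate_dirDeriv_comm (hs : IsOpen s) {m n : ℕ} (hf : ContDiffOn ℝ (m + n) f s) :
    EqOn ((dirDeriv v)^[m] ((dirDeriv w)^[n] f)) ((dirDeriv w)^[n] ((dirDeriv v)^[m] f)) s := by
  induction m generalizing f with
  | zero => exact fun _ _ => rfl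
  | succ m ih =>
    have hf' : ContDiffOn ℝ (n + 1) f s := hf.of_le (by norm_cast; omega)
    intro y hy
    rw [Function.iterate_succ_apply, Function.iterate_succ_apply,
      eqOn_iterate_dirDeriv_of_eqOn hs (eqOn_dirDeriv_iterate_dirDeriv_comm hs hf') m hy]
    exact ih (contDiffOn_dirDeriv hs (by simpa [add_right_comm] using hf)) hy

theorem eqOn_iterate_iterate_dirDeriv_add (hs : IsOpen s) {m n : ℕ}
    (hf : ContDiffOn ℝ (m + n) f s) (hg : ContDiffOn ℝ (m + n) g s) :
    EqOn ((dirDeriv v)^[m] ((dirDeriv w)^[n] (f + g)))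
      ((dirDeriv v)^[m] ((dirDeriv w)^[n] f) + (dirDeriv v)^[m] ((dirDeriv w)^[n] g)) s := by
  intro x hx
  rw [eqOn_iterate_dirDeriv_of_eqOn hs (eqOn_iterate_dirDeriv_add hs
    (hf.of_le (by norm_cast; omega)) (hg.of_le (by norm_cast; omega))) m hx]
  exact eqOn_iterate_dirDeriv_add hs (contDiffOn_iterate_dirDeriv hs hf)
    (contDiffOn_iterate_dirDeriv hs hg) hx

end DirectionalDerivative

section Slices

variable {F : Type*} [NormedAddCommGroup F] [NormedSpace ℝ F]

theorem deriv_slice_fst (f : ℝ × ℝ → F) (x y : ℝ) :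
    deriv (fun s => f (s, y)) x = dirDeriv (1, 0) f (x, y) := by
  simp [dirDeriv, lineDeriv, deriv_comp_const_add (fun s => f (s, y))]

theorem deriv_slice_snd (f : ℝ × ℝ → F) (x y : ℝ) :
    deriv (fun t => f (x, t)) y = dirDeriv (0, 1) f (x, y) := by
  simp [dirDeriv, lineDeriv, deriv_comp_const_add (fun t => f (x, t))]

theorem iteratedDeriv_slice_fst (n : ℕ) (f : ℝ × ℝ → F) (x y : ℝ) :
    iteratedDeriv n (fun s => f (s, y)) x = (dirDeriv (1, 0))^[n] f (x, y) := by
  induction n generalizing f with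
  | zero => simp
  | succ n ih =>
    simp_rw [iteratedDeriv_succ', Function.iterate_succ_apply, ← ih]
    congr 1
    exact funext fun s => deriv_slice_fst f s y

theorem iteratedDeriv_slice_snd (n : ℕ) (f : ℝ × ℝ → F) (x y : ℝ) :
    iteratedDeriv n (fun t => f (x, t)) y = (dirDeriv (0, 1))^[n] f (x, y) := by
  induction n generalizing f with
  | zero => simp
  | succ n ih =>
    simp_rw [iteratedDeriv_succ', Function.iterate_succ_apply, ← ih]
    congr 1
    exact funext fun t => deriv_slice_snd f x t

end Slices

theorem pd_eq_iterate_dirDeriv (u : ℝ × ℝ → ℂ) (m n : ℕ) (x y : ℝ) :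
    pd u m n x y = (dirDeriv (1, 0))^[m] ((dirDeriv (0, 1))^[n] u) (x, y) := by
  simp_rw [pd, iteratedDeriv_slice_snd, iteratedDeriv_slice_fst]

theorem helm_eq_iterate_dirDeriv (κ : ℝ) (u : ℝ × ℝ → ℂ) :
    helm κ u = (dirDeriv (1, 0))^[2] u + (dirDeriv (0, 1))^[2] u + ((κ : ℂ) ^ 2) • u := by
  ext p
  simp [helm, pd_eq_iterate_dirDeriv]

theorem pd_helm {κ : ℝ} {u : ℝ × ℝ → ℂ} {s : Set (ℝ × ℝ)} (hs : IsOpen s) {a n : ℕ}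
    (hu : ContDiffOn ℝ (a + n + 2) u s) {x y : ℝ} (hxy : (x, y) ∈ s) :
    pd (helm κ u) a n x y =
      pd u (a + 2) n x y + pd u a (n + 2) x y + (κ : ℂ) ^ 2 * pd u a n x y := by
  simp only [pd_eq_iterate_dirDeriv, helm_eq_iterate_dirDeriv]
  set X : (ℝ × ℝ → ℂ) → ℝ × ℝ → ℂ := dirDeriv (1, 0)
  set Y : (ℝ × ℝ → ℂ) → ℝ × ℝ → ℂ := dirDeriv (0, 1)
  have hX : ContDiffOn ℝ (a + n) (X^[2] u) s := contDiffOn_iterate_dirDeriv hs hu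
  have hY : ContDiffOn ℝ (a + n) (Y^[2] u) s := contDiffOn_iterate_dirDeriv hs hu
  have hu' : ContDiffOn ℝ (a + n) u s := hu.of_le (by norm_cast; omega)
  have hcomm : X^[a] (Y^[n] (X^[2] u)) (x, y) = X^[a + 2] (Y^[n] u) (x, y) := by
    rw [Function.iterate_add_apply]
    exact eqOn_iterate_dirDeriv_of_eqOn hs
      (eqOn_iterate_dirDeriv_comm hs (hu.of_le (by norm_cast; omega))).symm a hxy
  have hsmul : X^[a] (Y^[n] ((κ : ℂ) ^ 2 • u)) (x, y) = (κ : ℂ) ^ 2 * X^[a] (Y^[n] u) (x, y) := by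
    rw [eqOn_iterate_dirDeriv_of_eqOn hs (eqOn_iterate_dirDeriv_const_smul _ hs
      (hu'.of_le (by norm_cast; omega))) a hxy]
    exact eqOn_iterate_dirDeriv_const_smul _ hs (contDiffOn_iterate_dirDeriv hs hu') hxy
  rw [eqOn_iterate_iterate_dirDeriv_add (f := X^[2] u + Y^[2] u) (g := (κ : ℂ) ^ 2 • u) hs
      (hX.add hY) (hu'.const_smul ((κ : ℂ) ^ 2)) hxy, Pi.add_apply,
    eqOn_iterate_iterate_dirDeriv_add hs hX hY hxy, Pi.add_apply, hcomm, hsmul,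
    ← Function.iterate_add_apply Y n 2]

section BinomialRecurrence

open Finset

theorem sum_range_choose_mul_pow_shift {R : Type*} [CommRing R] (c : R) (h : ℕ) (b : ℕ → R) :
    ∑ q ∈ range (h + 1), (h.choose q : R) * c ^ q * (b (h - q + 1) + c * b (h - q)) =
      ∑ q ∈ range (h + 2), ((h + 1).choose q : R) * c ^ q * b (h + 1 - q) := by
  have hL := Nat.sum_antidiagonal_eq_sum_range_succ
    (fun i j => (h.choose i : R) * c ^ i * (b (j + 1) + c * b j)) h
  have hR := Nat.sum_antidiagonal_eq_sum_range_succ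
    (fun i j => ((h + 1).choose i : R) * (c ^ i * b j)) (h + 1)
  simp only [Nat.succ_eq_add_one, ← mul_assoc] at hL hR
  rw [← hL, ← hR]
  simp only [mul_assoc]
  rw [sum_antidiagonal_choose_succ_mul (fun i j => c ^ i * b j)]
  simp only [mul_add, sum_add_distrib]
  congr 1
  refine sum_congr rfl fun ij hij => ?_
  rw [Nat.choose_symm_of_eq_add (mem_antidiagonal.mp hij).symm]
  ring

theorem sum_range_choose_mul_pow_reflect {R : Type*} [CommRing R] (c : R) (h : ℕ) (b : ℕ → R) :
    ∑ q ∈ range (h + 1), (h.choose q : R) * c ^ q * b (h - q) =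
      ∑ j ∈ range (h + 1), (h.choose j : R) * c ^ (h - j) * b j := by
  rw [← sum_range_reflect]
  refine sum_congr rfl fun j hj => ?_
  have hj : j ≤ h := mem_range_succ_iff.mp hj
  rw [show h + 1 - 1 - j = h - j by omega, Nat.choose_symm hj, Nat.sub_sub_self hj]

theorem eq_of_two_step_recurrence {R : Type*} [CommRing R] (c : R) (N : ℕ) (A F : ℕ → ℕ → R)
    (hrec : ∀ a n, a + n + 2 ≤ N → A (a + 2) n = F a n - A a (n + 2) - c * A a n)
    (h a n : ℕ) (hN : a + 2 * h + n ≤ N) :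
    A (a + 2 * h) n =
      (-1) ^ h * ∑ q ∈ range (h + 1), (h.choose q : R) * c ^ q * A a (2 * h + n - 2 * q)
      + ∑ q ∈ Icc 1 h, ∑ j ∈ range q,
          (-1) ^ (q - 1) * ((q - 1).choose j : R) * c ^ (q - j - 1) *
            F (a + 2 * h - 2 * q) (n + 2 * j) := by
  -- Expand `A ((a + 2) + 2 * h)` over the base `a + 2` and resolve each `A (a + 2) _` by `hrec`:
  -- the `F a _` terms so produced form the new outer summand `q = h + 1`.
  induction h generalizing a with
  | zero => simp
  | succ h ih =>
    have hpascal : ∑ q ∈ range (h + 1), (h.choose q : R) * c ^ q *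
          (A a (n + 2 * (h - q + 1)) + c * A a (n + 2 * (h - q))) =
        ∑ q ∈ range (h + 2), ((h + 1).choose q : R) * c ^ q * A a (2 * (h + 1) + n - 2 * q) := by
      rw [sum_range_choose_mul_pow_shift c h (fun k => A a (n + 2 * k))]
      refine sum_congr rfl fun q hq => ?_
      rw [show n + 2 * (h + 1 - q) = 2 * (h + 1) + n - 2 * q by have := mem_range.mp hq; omega]
    have hA : ∑ q ∈ range (h + 1), (h.choose q : R) * c ^ q * A (a + 2) (2 * h + n - 2 * q) =
        ∑ j ∈ range (h + 1), (h.choose j : R) * c ^ (h - j) * F a (n + 2 * j) -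
          ∑ q ∈ range (h + 2), ((h + 1).choose q : R) * c ^ q * A a (2 * (h + 1) + n - 2 * q) := by
      rw [← hpascal, ← sum_range_choose_mul_pow_reflect c h (fun k => F a (n + 2 * k)),
        ← sum_sub_distrib]
      refine sum_congr rfl fun q hq => ?_
      have hq : q ≤ h := mem_range_succ_iff.mp hq
      rw [hrec _ _ (by omega), show 2 * h + n - 2 * q = n + 2 * (h - q) by omega,
        show n + 2 * (h - q) + 2 = n + 2 * (h - q + 1) by ring]
      ring
    rw [show a + 2 * (h + 1) = a + 2 + 2 * h by ring, ih (a + 2) (by omega), hA,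
      sum_Icc_succ_top (by omega)]
    have htop : ∑ j ∈ range (h + 1), (-1) ^ (h + 1 - 1) * ((h + 1 - 1).choose j : R) *
          c ^ (h + 1 - j - 1) * F (a + 2 + 2 * h - 2 * (h + 1)) (n + 2 * j) =
        (-1) ^ h * ∑ j ∈ range (h + 1), (h.choose j : R) * c ^ (h - j) * F a (n + 2 * j) := by
      rw [mul_sum]
      refine sum_congr rfl fun j _ => ?_
      rw [show h + 1 - j - 1 = h - j by omega, show a + 2 + 2 * h - 2 * (h + 1) = a by omega,
        Nat.add_sub_cancel]
      ring
    rw [htop]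
    ring

end BinomialRecurrence

/-- dependence of `u^{(m,n)}` for `(m,n) ∈ Λ_{M+1}^2` on lower-order
`x`-derivatives, via the Helmholtz equation `Δu + κ²u = f`. -/
theorem statement0 (κ : ℝ) (M : ℕ) (Ω : Set (ℝ × ℝ)) (hΩ : IsOpen Ω)
    (xs ys : ℝ) (hmem : (xs, ys) ∈ Ω) (u : ℝ × ℝ → ℂ)
    (hu : ContDiffOn ℝ ((M : ℕ∞) + 1) u Ω) :
    ∀ m n : ℕ, (m, n) ∈ Lam2 (M + 1) →
      pd u m n xs ys =
        (-1 : ℂ) ^ (m / 2) *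
            ∑ q ∈ Finset.range (m / 2 + 1),
              (Nat.choose (m / 2) q : ℂ) * (κ : ℂ) ^ (2 * q) *
                pd u (m % 2) (2 * (m / 2) + n - 2 * q) xs ys
        + ∑ q ∈ Finset.Icc 1 (m / 2), ∑ j ∈ Finset.range q,
            (-1 : ℂ) ^ (q - 1) * (Nat.choose (q - 1) j : ℂ) *
              (κ : ℂ) ^ (2 * (q - j - 1)) *
                pd (helm κ u) (m - 2 * q) (n + 2 * j) xs ys := by
  intro m n hmn
  have hmn : m + n ≤ M + 1 := by
    simp only [Lam2, Lam, Finset.mem_filter] at hmn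
    exact hmn.1.2
  have hu : ContDiffOn ℝ (M + 1 : ℕ) u Ω := by exact_mod_cast hu
  have hrec : ∀ a k, a + k + 2 ≤ M + 1 → pd u (a + 2) k xs ys =
      pd (helm κ u) a k xs ys - pd u a (k + 2) xs ys - (κ : ℂ) ^ 2 * pd u a k xs ys := by
    intro a k hak
    rw [pd_helm hΩ (hu.of_le (by exact_mod_cast hak)) hmem]
    ring
  have hsol := eq_of_two_step_recurrence ((κ : ℂ) ^ 2) (M + 1) (fun a k => pd u a k xs ys)
    (fun a k => pd (helm κ u) a k xs ys) hrec (m / 2) (m % 2) n (by omega)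
  simpa only [Nat.mod_add_div, ← pow_mul] using hsol
end

section
/- For every M ∈ ℕ, κ ∈ ℝ, x,y ∈ ℂ, and every family of complex numbers a : ℕ×ℕ → ℂ, the following finite-sum identity holds: Σ_{(m,n)∈Λ_{M+1}^1} (x^m y^n/(m!·n!)) a(m,n) + Σ_{(m,n)∈Λ_{M+1}^2} (x^m y^n/(m!·n!)) · (−1)^{⌊m/2⌋} Σ_{q=0}^{⌊m/2⌋} C(⌊m/2⌋,q) κ^{2q} a(odd(m), 2⌊m/2⌋+n−2q) = Σ_{(m,n)∈Λ_{M+1}^1} G_{M+1,m,n}(x,y) · a(m,n). -/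
open scoped BigOperators
open Complex

section Aux

variable (κ : ℝ) (x y : ℂ) (a : ℕ × ℕ → ℂ)

/-- Flattened summand of `Gpoly ... * a`. -/
noncomputable def Tterm (q : (ℕ × ℕ) × ℕ × ℕ) : ℂ :=
  (-1 : ℂ) ^ q.2.2 * (Nat.choose q.2.2 q.2.1 : ℂ) * (κ : ℂ) ^ (2 * q.2.1) *
    x ^ (q.1.1 + 2 * q.2.2) * y ^ (q.1.2 + 2 * q.2.1 - 2 * q.2.2) /
    ((Nat.factorial (q.1.1 + 2 * q.2.2) : ℂ) *
      (Nat.factorial (q.1.2 + 2 * q.2.1 - 2 * q.2.2) : ℂ)) * a q.1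

/-- Flattened summand of the `Lam2` sum. -/
noncomputable def Cterm (t : (ℕ × ℕ) × ℕ) : ℂ :=
  x ^ t.1.1 * y ^ t.1.2 /
    ((Nat.factorial t.1.1 : ℂ) * (Nat.factorial t.1.2 : ℂ)) *
    ((-1 : ℂ) ^ (t.1.1 / 2) *
      ((Nat.choose (t.1.1 / 2) t.2 : ℂ) * (κ : ℂ) ^ (2 * t.2) *
        a (t.1.1 % 2, 2 * (t.1.1 / 2) + t.1.2 - 2 * t.2)))

end Aux

/-- Flattened index set for the right-hand side. -/
def Bset (N : ℕ) : Finset ((ℕ × ℕ) × ℕ × ℕ) :=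
  ((Lam1 N) ×ˢ (Finset.range (N + 1) ×ˢ Finset.range (N + 1))).filter
    (fun q => q.1.1 + q.1.2 + 2 * q.2.1 ≤ N ∧ q.2.1 ≤ q.2.2 ∧ q.2.2 ≤ q.2.1 + q.1.2 / 2)

/-- Flattened index set for the `Lam2` sum. -/
def Cset (N : ℕ) : Finset ((ℕ × ℕ) × ℕ) :=
  ((Lam2 N) ×ˢ Finset.range (N + 1)).filter (fun t => t.2 ≤ t.1.1 / 2)

lemma mem_Lam1_iff {N : ℕ} {p : ℕ × ℕ} : p ∈ Lam1 N ↔ p.1 + p.2 ≤ N ∧ p.1 ≤ 1 := by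
  simp only [Lam1, Lam, Finset.mem_filter, Finset.mem_product, Finset.mem_range]
  omega

lemma mem_Lam2_iff {N : ℕ} {p : ℕ × ℕ} : p ∈ Lam2 N ↔ p.1 + p.2 ≤ N ∧ 2 ≤ p.1 := by
  simp only [Lam2, Lam, Finset.mem_filter, Finset.mem_product, Finset.mem_range]
  omega

lemma sum_filter_product' {α β : Type*} [DecidableEq α] [DecidableEq β]
    (s : Finset α) (t : Finset β) (C : α × β → Prop) [DecidablePred C]
    (f : α × β → ℂ) :
    ∑ q ∈ (s ×ˢ t).filter C, f q
      = ∑ a ∈ s, ∑ b ∈ t.filter (fun b => C (a, b)), f (a, b) := by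
  rw [Finset.sum_filter, Finset.sum_product]
  exact Finset.sum_congr rfl fun a _ => (Finset.sum_filter _ _).symm

lemma gpoly_eq (κ : ℝ) (x y : ℂ) (a : ℕ × ℕ → ℂ) (N : ℕ) (rs : ℕ × ℕ)
    (h1 : rs.1 + rs.2 ≤ N) :
    Gpoly κ N rs.1 rs.2 x y * a rs
      = ∑ pl ∈ (Finset.range (N + 1) ×ˢ Finset.range (N + 1)).filter
          (fun pl => rs.1 + rs.2 + 2 * pl.1 ≤ N ∧ pl.1 ≤ pl.2 ∧ pl.2 ≤ pl.1 + rs.2 / 2),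
        Tterm κ x y a (rs, pl) := by
  obtain ⟨r, s⟩ := rs
  simp only at h1
  rw [sum_filter_product']
  rw [Gpoly, if_pos h1]
  simp only [Finset.sum_mul]
  rw [show Finset.range ((N - r - s) / 2 + 1)
        = (Finset.range (N + 1)).filter (fun p => r + s + 2 * p ≤ N) by
      ext p
      simp only [Finset.mem_filter, Finset.mem_range]
      omega]
  rw [Finset.sum_filter]
  refine Finset.sum_congr rfl fun p _ => ?_
  by_cases hA : r + s + 2 * p ≤ N
  · rw [if_pos hA]
    rw [show Finset.Icc p (p + s / 2)
          = (Finset.range (N + 1)).filter (fun ℓ => p ≤ ℓ ∧ ℓ ≤ p + s / 2) by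
        ext ℓ
        simp only [Finset.mem_filter, Finset.mem_range, Finset.mem_Icc]
        omega]
    rw [show ((Finset.range (N + 1)).filter
          (fun ℓ => r + s + 2 * p ≤ N ∧ p ≤ ℓ ∧ ℓ ≤ p + s / 2))
        = (Finset.range (N + 1)).filter (fun ℓ => p ≤ ℓ ∧ ℓ ≤ p + s / 2) by
      ext ℓ
      simp only [Finset.mem_filter, Finset.mem_range]
      tauto]
    exact Finset.sum_congr rfl fun ℓ _ => rfl
  · rw [if_neg hA]
    rw [Finset.filter_false_of_mem (fun ℓ _ h => hA h.1), Finset.sum_empty]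

lemma lam2_term_eq (κ : ℝ) (x y : ℂ) (a : ℕ × ℕ → ℂ) (N : ℕ) (mn : ℕ × ℕ)
    (h1 : mn.1 + mn.2 ≤ N) :
    x ^ mn.1 * y ^ mn.2 /
        ((Nat.factorial mn.1 : ℂ) * (Nat.factorial mn.2 : ℂ)) *
        ((-1 : ℂ) ^ (mn.1 / 2) *
          ∑ q ∈ Finset.range (mn.1 / 2 + 1),
            (Nat.choose (mn.1 / 2) q : ℂ) * (κ : ℂ) ^ (2 * q) *
              a (mn.1 % 2, 2 * (mn.1 / 2) + mn.2 - 2 * q))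
      = ∑ q ∈ (Finset.range (N + 1)).filter (fun q => q ≤ mn.1 / 2),
          Cterm κ x y a (mn, q) := by
  obtain ⟨m, n⟩ := mn
  simp only at h1
  rw [Finset.mul_sum, Finset.mul_sum]
  rw [show (Finset.range (N + 1)).filter (fun q => q ≤ m / 2)
        = Finset.range (m / 2 + 1) by
      ext q
      simp only [Finset.mem_filter, Finset.mem_range]
      omega]
  exact Finset.sum_congr rfl fun q _ => rfl

theorem sum_B_split1 (κ : ℝ) (x y : ℂ) (a : ℕ × ℕ → ℂ) (N : ℕ) :
    (∑ p ∈ Lam1 N,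
        x ^ p.1 * y ^ p.2 /
          ((Nat.factorial p.1 : ℂ) * (Nat.factorial p.2 : ℂ)) * a p)
      = ∑ q ∈ (Bset N).filter (fun q => q.2.2 = 0), Tterm κ x y a q := by
  refine Finset.sum_nbij' (fun rs => (rs, (0, 0))) (fun q => q.1) ?_ ?_ ?_ ?_ ?_
  · intro rs hrs
    have h := mem_Lam1_iff.mp hrs
    simp [Bset, mem_Lam1_iff]
    omega
  · intro q hq
    simp only [Bset, Finset.mem_filter, Finset.mem_product] at hq
    exact hq.1.1.1
  · intro rs _; rfl
  · rintro ⟨rs, p, ℓ⟩ hq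
    simp [Bset, mem_Lam1_iff] at hq
    simp only [Prod.mk.injEq, true_and, and_true]
    omega
  · intro rs _
    simp only [Tterm]
    norm_num

theorem sum_B_split2 (κ : ℝ) (x y : ℂ) (a : ℕ × ℕ → ℂ) (N : ℕ) :
    (∑ t ∈ Cset N, Cterm κ x y a t)
      = ∑ q ∈ (Bset N).filter (fun q => ¬ q.2.2 = 0), Tterm κ x y a q := by
  refine Finset.sum_nbij'
    (fun t => ((t.1.1 % 2, t.1.2 + 2 * (t.1.1 / 2) - 2 * t.2), (t.2, t.1.1 / 2)))
    (fun q => ((q.1.1 + 2 * q.2.2, q.1.2 + 2 * q.2.1 - 2 * q.2.2), q.2.1))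
    ?_ ?_ ?_ ?_ ?_
  · rintro ⟨⟨m, n⟩, q⟩ ht
    simp [Cset, mem_Lam2_iff] at ht
    simp [Bset, mem_Lam1_iff]
    omega
  · rintro ⟨⟨r, s⟩, p, ℓ⟩ hq
    simp [Bset, mem_Lam1_iff] at hq
    simp [Cset, mem_Lam2_iff]
    omega
  · rintro ⟨⟨m, n⟩, q⟩ ht
    simp [Cset, mem_Lam2_iff] at ht
    simp only [Prod.mk.injEq, true_and, and_true]
    omega
  · rintro ⟨⟨r, s⟩, p, ℓ⟩ hq
    simp [Bset, mem_Lam1_iff] at hq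
    simp only [Prod.mk.injEq, true_and, and_true]
    omega
  · rintro ⟨⟨m, n⟩, q⟩ ht
    simp [Cset, mem_Lam2_iff] at ht
    simp only [Cterm, Tterm]
    have e1 : m % 2 + 2 * (m / 2) = m := by omega
    have e2 : n + 2 * (m / 2) - 2 * q + 2 * q - 2 * (m / 2) = n := by omega
    have e3 : (2 : ℕ) * (m / 2) + n - 2 * q = n + 2 * (m / 2) - 2 * q := by omega
    rw [e1, e2, e3]
    ring

/-- finite-sum identity producing the polynomials `G_{M+1,m,n}`. -/
theorem statement2 (M : ℕ) (κ : ℝ) (x y : ℂ) (a : ℕ × ℕ → ℂ) :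
    (∑ p ∈ Lam1 (M + 1),
        x ^ p.1 * y ^ p.2 /
          ((Nat.factorial p.1 : ℂ) * (Nat.factorial p.2 : ℂ)) * a p)
    + (∑ p ∈ Lam2 (M + 1),
        x ^ p.1 * y ^ p.2 /
          ((Nat.factorial p.1 : ℂ) * (Nat.factorial p.2 : ℂ)) *
          ((-1 : ℂ) ^ (p.1 / 2) *
            ∑ q ∈ Finset.range (p.1 / 2 + 1),
              (Nat.choose (p.1 / 2) q : ℂ) * (κ : ℂ) ^ (2 * q) *
                a (p.1 % 2, 2 * (p.1 / 2) + p.2 - 2 * q)))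
    = ∑ p ∈ Lam1 (M + 1), Gpoly κ (M + 1) p.1 p.2 x y * a p := by
  have hsplit := Finset.sum_filter_add_sum_filter_not (Bset (M + 1))
    (fun q => q.2.2 = 0) (Tterm κ x y a)
  have hB : (∑ q ∈ Bset (M + 1), Tterm κ x y a q)
      = ∑ p ∈ Lam1 (M + 1), Gpoly κ (M + 1) p.1 p.2 x y * a p := by
    rw [Bset, sum_filter_product']
    exact Finset.sum_congr rfl fun rs hrs =>
      (gpoly_eq κ x y a (M + 1) rs (mem_Lam1_iff.mp hrs).1).symm
  have hC : (∑ p ∈ Lam2 (M + 1),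
        x ^ p.1 * y ^ p.2 /
          ((Nat.factorial p.1 : ℂ) * (Nat.factorial p.2 : ℂ)) *
          ((-1 : ℂ) ^ (p.1 / 2) *
            ∑ q ∈ Finset.range (p.1 / 2 + 1),
              (Nat.choose (p.1 / 2) q : ℂ) * (κ : ℂ) ^ (2 * q) *
                a (p.1 % 2, 2 * (p.1 / 2) + p.2 - 2 * q)))
      = ∑ t ∈ Cset (M + 1), Cterm κ x y a t := by
    rw [Cset, sum_filter_product']
    exact Finset.sum_congr rfl fun mn hmn =>
      lam2_term_eq κ x y a (M + 1) mn (mem_Lam2_iff.mp hmn).1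
  rw [hC, sum_B_split1 κ x y a (M + 1), sum_B_split2 κ x y a (M + 1), hsplit, hB]
end

section
/- For every M ∈ ℕ with M ≥ 1, κ ∈ ℝ, x,y ∈ ℂ, and every family of complex numbers b : ℕ×ℕ → ℂ, the following finite-sum identity holds: Σ_{(m,n)∈Λ_{M+1}^2} (x^m y^n/(m!·n!)) · Σ_{q=1}^{⌊m/2⌋} Σ_{j=0}^{q−1} (−1)^{q−1} C(q−1,j) κ^{2(q−j−1)} b(m−2q, n+2j) = Σ_{(m,n)∈Λ_{M−1}} H_{M+1,m,n}(x,y) · b(m,n). -/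
open scoped BigOperators
open Complex

/-- finite-sum identity producing the polynomials `H_{M+1,m,n}`. -/
theorem statement3 (M : ℕ) (hM : 1 ≤ M) (κ : ℝ) (x y : ℂ) (b : ℕ × ℕ → ℂ) :
    (∑ p ∈ Lam2 (M + 1),
        x ^ p.1 * y ^ p.2 /
          ((Nat.factorial p.1 : ℂ) * (Nat.factorial p.2 : ℂ)) *
          (∑ q ∈ Finset.Icc 1 (p.1 / 2), ∑ j ∈ Finset.range q,
            (-1 : ℂ) ^ (q - 1) * (Nat.choose (q - 1) j : ℂ) *
              (κ : ℂ) ^ (2 * (q - j - 1)) * b (p.1 - 2 * q, p.2 + 2 * j)))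
    = ∑ p ∈ Lam (M - 1), Hpoly κ (M + 1) p.1 p.2 x y * b p := by
  classical
  have hR : ∀ p ∈ Lam (M - 1), Hpoly κ (M + 1) p.1 p.2 x y * b p
      = ∑ pp ∈ Finset.range ((M + 1 - 2 - p.1 - p.2) / 2 + 1),
          ∑ ℓ ∈ Finset.Icc (pp + 1) (pp + p.2 / 2 + 1),
            (-1 : ℂ) ^ (ℓ - 1) * (Nat.choose (ℓ - 1) pp : ℂ) * (κ : ℂ) ^ (2 * pp) *
              x ^ (p.1 + 2 * ℓ) * y ^ (2 * pp + p.2 + 2 - 2 * ℓ) /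
              ((Nat.factorial (p.1 + 2 * ℓ) : ℂ) *
                (Nat.factorial (2 * pp + p.2 + 2 - 2 * ℓ) : ℂ)) * b p := by
    intro p hp
    simp only [Lam, Finset.mem_filter, Finset.mem_product, Finset.mem_range] at hp
    rw [Hpoly, if_pos (by omega), Finset.sum_mul]
    exact Finset.sum_congr rfl fun pp _ => by rw [Finset.sum_mul]
  rw [Finset.sum_congr rfl hR]
  have L : (∑ p ∈ Lam2 (M + 1),
        x ^ p.1 * y ^ p.2 /
          ((Nat.factorial p.1 : ℂ) * (Nat.factorial p.2 : ℂ)) *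
          (∑ q ∈ Finset.Icc 1 (p.1 / 2), ∑ j ∈ Finset.range q,
            (-1 : ℂ) ^ (q - 1) * (Nat.choose (q - 1) j : ℂ) *
              (κ : ℂ) ^ (2 * (q - j - 1)) * b (p.1 - 2 * q, p.2 + 2 * j)))
      = ∑ t ∈ (Lam2 (M + 1)).sigma
          (fun p => (Finset.Icc 1 (p.1 / 2)).sigma fun q => Finset.range q),
          x ^ t.1.1 * y ^ t.1.2 /
            ((Nat.factorial t.1.1 : ℂ) * (Nat.factorial t.1.2 : ℂ)) *
            ((-1 : ℂ) ^ (t.2.1 - 1) * (Nat.choose (t.2.1 - 1) t.2.2 : ℂ) *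
              (κ : ℂ) ^ (2 * (t.2.1 - t.2.2 - 1)) *
              b (t.1.1 - 2 * t.2.1, t.1.2 + 2 * t.2.2)) := by
    rw [Finset.sum_sigma]
    refine Finset.sum_congr rfl fun p _ => ?_
    rw [Finset.sum_sigma, Finset.mul_sum]
    exact Finset.sum_congr rfl fun q _ => by rw [Finset.mul_sum]
  have R : (∑ p ∈ Lam (M - 1),
        ∑ pp ∈ Finset.range ((M + 1 - 2 - p.1 - p.2) / 2 + 1),
          ∑ ℓ ∈ Finset.Icc (pp + 1) (pp + p.2 / 2 + 1),
            (-1 : ℂ) ^ (ℓ - 1) * (Nat.choose (ℓ - 1) pp : ℂ) * (κ : ℂ) ^ (2 * pp) *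
              x ^ (p.1 + 2 * ℓ) * y ^ (2 * pp + p.2 + 2 - 2 * ℓ) /
              ((Nat.factorial (p.1 + 2 * ℓ) : ℂ) *
                (Nat.factorial (2 * pp + p.2 + 2 - 2 * ℓ) : ℂ)) * b p)
      = ∑ t ∈ (Lam (M - 1)).sigma
          (fun p => (Finset.range ((M + 1 - 2 - p.1 - p.2) / 2 + 1)).sigma
            fun pp => Finset.Icc (pp + 1) (pp + p.2 / 2 + 1)),
          (-1 : ℂ) ^ (t.2.2 - 1) * (Nat.choose (t.2.2 - 1) t.2.1 : ℂ) *
            (κ : ℂ) ^ (2 * t.2.1) *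
            x ^ (t.1.1 + 2 * t.2.2) * y ^ (2 * t.2.1 + t.1.2 + 2 - 2 * t.2.2) /
            ((Nat.factorial (t.1.1 + 2 * t.2.2) : ℂ) *
              (Nat.factorial (2 * t.2.1 + t.1.2 + 2 - 2 * t.2.2) : ℂ)) * b t.1 := by
    rw [Finset.sum_sigma]
    exact Finset.sum_congr rfl fun p _ => by rw [Finset.sum_sigma]
  rw [L, R]
  refine Finset.sum_bij'
    (fun t _ => (⟨(t.1.1 - 2 * t.2.1, t.1.2 + 2 * t.2.2), t.2.1 - t.2.2 - 1, t.2.1⟩ :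
      Σ _ : ℕ × ℕ, Σ _ : ℕ, ℕ))
    (fun t _ => (⟨(t.1.1 + 2 * t.2.2, 2 * t.2.1 + t.1.2 + 2 - 2 * t.2.2), t.2.2,
      t.2.2 - 1 - t.2.1⟩ : Σ _ : ℕ × ℕ, Σ _ : ℕ, ℕ))
    ?_ ?_ ?_ ?_ ?_
  · rintro ⟨⟨m, n⟩, q, j⟩ ht
    simp only [Lam2, Lam, Finset.mem_sigma, Finset.mem_filter, Finset.mem_product,
      Finset.mem_range, Finset.mem_Icc] at ht ⊢
    omega
  · rintro ⟨⟨a, c⟩, pp, ℓ⟩ ht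
    simp only [Lam2, Lam, Finset.mem_sigma, Finset.mem_filter, Finset.mem_product,
      Finset.mem_range, Finset.mem_Icc] at ht ⊢
    omega
  · rintro ⟨⟨m, n⟩, q, j⟩ ht
    simp only [Lam2, Lam, Finset.mem_sigma, Finset.mem_filter, Finset.mem_product,
      Finset.mem_range, Finset.mem_Icc] at ht
    simp only [Sigma.mk.inj_iff, Prod.mk.injEq, heq_eq_eq]
    refine ⟨⟨by omega, by omega⟩, ?_, ?_⟩ <;> first | trivial | omega
  · rintro ⟨⟨a, c⟩, pp, ℓ⟩ ht
    simp only [Lam2, Lam, Finset.mem_sigma, Finset.mem_filter, Finset.mem_product,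
      Finset.mem_range, Finset.mem_Icc] at ht
    simp only [Sigma.mk.inj_iff, Prod.mk.injEq, heq_eq_eq]
    refine ⟨⟨by omega, by omega⟩, ?_, ?_⟩ <;> first | trivial | omega
  · rintro ⟨⟨m, n⟩, q, j⟩ ht
    simp only [Lam2, Lam, Finset.mem_sigma, Finset.mem_filter, Finset.mem_product,
      Finset.mem_range, Finset.mem_Icc] at ht
    have h1 : m - 2 * q + 2 * q = m := by omega
    have h2 : 2 * (q - j - 1) + (n + 2 * j) + 2 - 2 * q = n := by omega
    have h3 : q - 1 - (q - j - 1) = j := by omega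
    simp only [h1, h2]
    rw [show Nat.choose (q - 1) (q - j - 1) = Nat.choose (q - 1) j by
      rw [show q - j - 1 = (q - 1) - j by omega, Nat.choose_symm (by omega)]]
    ring
end
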